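/- Let Λ₁ be a row-finite k₁-graph with no sources and Λ₂ a row-finite k₂-graph with no sources. Then the cartesian product (k₁+k₂)-graph Λ₁ × Λ₂ is strongly aperiodic if and only if both Λ₁ and Λ₂ are strongly aperiodic. -/

import Mathlib

set_option autoImplicit false

open scoped Classical

/-- A `k`-graph: a countable small category together with a degree functor
`d : Λ → ℕ^k` satisfying the unique factorization property.  Paths (morphisms)
form a single type; vertices (objects) are identified with the paths of
degree `0`. -/
structure KGraph (k : ℕ) where
  /-- the type of paths (morphisms) of the `k`-graph -/
  Path : Type
  countable : Countable Path
  nonempty : Nonempty Path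
  /-- the range (codomain) vertex of a path -/
  r : Path → Path
  /-- the source (domain) vertex of a path -/
  s : Path → Path
  /-- composition: `comp lam mu` is the path `λμ`, meaningful when `s lam = r mu` -/
  comp : Path → Path → Path
  /-- the degree functor -/
  d : Path → Fin k → ℕ
  d_r : ∀ lam, d (r lam) = 0
  d_s : ∀ lam, d (s lam) = 0
  r_r : ∀ lam, r (r lam) = r lam
  s_r : ∀ lam, s (r lam) = r lam
  r_s : ∀ lam, r (s lam) = s lam
  s_s : ∀ lam, s (s lam) = s lam
  id_comp : ∀ lam, comp (r lam) lam = lam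
  comp_id : ∀ lam, comp lam (s lam) = lam
  r_comp : ∀ lam mu, s lam = r mu → r (comp lam mu) = r lam
  s_comp : ∀ lam mu, s lam = r mu → s (comp lam mu) = s mu
  d_comp : ∀ lam mu, s lam = r mu → d (comp lam mu) = d lam + d mu
  comp_assoc : ∀ lam mu nu, s lam = r mu → s mu = r nu →
    comp (comp lam mu) nu = comp lam (comp mu nu)
  /-- the unique factorization property -/
  factor : ∀ lam (m n : Fin k → ℕ), d lam = m + n →
    ∃! p : Path × Path, s p.1 = r p.2 ∧ comp p.1 p.2 = lam ∧ d p.1 = m ∧ d p.2 = n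

namespace KGraph

variable {k : ℕ}

/-- `v` is a vertex, i.e. an element of `Λ⁰`. -/
def IsVertex (Λ : KGraph k) (v : Λ.Path) : Prop := Λ.d v = 0

/-- `v ≤ w`, i.e. `vΛw ≠ ∅`. -/
def Conn (Λ : KGraph k) (v w : Λ.Path) : Prop := ∃ lam, Λ.r lam = v ∧ Λ.s lam = w

/-- the canonical generator `e i` of `ℕ^k`. -/
def eVec (k : ℕ) (i : Fin k) : Fin k → ℕ := Pi.single i 1

/-- `Λ` is row-finite: `vΛⁿ` is finite for every vertex `v` and `n ∈ ℕ^k`. -/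
def RowFinite (Λ : KGraph k) : Prop :=
  ∀ v, Λ.IsVertex v → ∀ n : Fin k → ℕ, {lam | Λ.r lam = v ∧ Λ.d lam = n}.Finite

/-- `Λ` has no sources: `vΛ^{e i} ≠ ∅` for every vertex `v` and `i`. -/
def NoSources (Λ : KGraph k) : Prop :=
  ∀ v, Λ.IsVertex v → ∀ i : Fin k, ∃ lam, Λ.r lam = v ∧ Λ.d lam = eVec k i

/-- the middle factor `λ(m,n)`: the unique `σ` such that `λ = μστ` with
`d μ = m`, `d σ = n - m`, `d τ = d λ - n` (junk value if no factorization exists). -/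
noncomputable def seg (Λ : KGraph k) (lam : Λ.Path) (m n : Fin k → ℕ) : Λ.Path :=
  if h : ∃ sig, ∃ mu tau, Λ.s mu = Λ.r sig ∧ Λ.s sig = Λ.r tau ∧
      Λ.comp (Λ.comp mu sig) tau = lam ∧ Λ.d mu = m ∧ Λ.d sig = n - m ∧
      Λ.d tau = Λ.d lam - n
  then h.choose else lam

/-- `Λ` has no local periodicity at the vertex `v`. -/
def NoLocalPeriodicity (Λ : KGraph k) (v : Λ.Path) : Prop :=
  ∀ m n : Fin k → ℕ, m ≠ n →
    ∃ lam, Λ.r lam = v ∧ m ⊔ n ≤ Λ.d lam ∧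
      Λ.seg lam m (m + Λ.d lam - (m ⊔ n)) ≠ Λ.seg lam n (n + Λ.d lam - (m ⊔ n))

/-- `Λ` is aperiodic: no vertex has local periodicity. -/
def Aperiodic (Λ : KGraph k) : Prop := ∀ v, Λ.IsVertex v → Λ.NoLocalPeriodicity v

/-- a hereditary set of vertices -/
def Hereditary (Λ : KGraph k) (H : Set Λ.Path) : Prop :=
  ∀ v ∈ H, ∀ w, Λ.Conn v w → w ∈ H

/-- a saturated set of vertices -/
def Saturated (Λ : KGraph k) (H : Set Λ.Path) : Prop :=
  ∀ v, Λ.IsVertex v → (∃ mu, Λ.r mu = v) →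
    (∃ i : Fin k, ∀ lam, Λ.r lam = v → Λ.d lam = eVec k i → Λ.s lam ∈ H) → v ∈ H

/-- the saturation of a set of vertices: the smallest saturated set containing it -/
def saturation (Λ : KGraph k) (H : Set Λ.Path) : Set Λ.Path :=
  ⋂₀ {K : Set Λ.Path | H ⊆ K ∧ Λ.Saturated K}

/-- no local periodicity at the vertex `v` of the quotient graph `Γ(Λ \ H)`
(whose paths are the paths of `Λ` with source outside `H`). -/
def QuotNoLocalPeriodicity (Λ : KGraph k) (H : Set Λ.Path) (v : Λ.Path) : Prop :=
  ∀ m n : Fin k → ℕ, m ≠ n →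
    ∃ lam, Λ.r lam = v ∧ Λ.s lam ∉ H ∧ m ⊔ n ≤ Λ.d lam ∧
      Λ.seg lam m (m + Λ.d lam - (m ⊔ n)) ≠ Λ.seg lam n (n + Λ.d lam - (m ⊔ n))

/-- `Λ` is strongly aperiodic: `Γ(Λ \ H)` is aperiodic for every saturated
hereditary proper subset `H ⊊ Λ⁰`. -/
def StronglyAperiodic (Λ : KGraph k) : Prop :=
  ∀ H : Set Λ.Path, (∀ v ∈ H, Λ.IsVertex v) → Λ.Hereditary H → Λ.Saturated H →
    H ≠ {v | Λ.IsVertex v} →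
    ∀ v, Λ.IsVertex v → v ∉ H → Λ.QuotNoLocalPeriodicity H v

/-- a maximal tail -/
def MaximalTail (Λ : KGraph k) (γ : Set Λ.Path) : Prop :=
  γ.Nonempty ∧ (∀ v ∈ γ, Λ.IsVertex v) ∧
  (∀ v₁ ∈ γ, ∀ v₂ ∈ γ, ∃ w ∈ γ, Λ.Conn v₁ w ∧ Λ.Conn v₂ w) ∧
  (∀ v ∈ γ, ∀ i : Fin k, ∃ f, Λ.r f = v ∧ Λ.d f = eVec k i ∧ Λ.s f ∈ γ) ∧
  (∀ v, Λ.IsVertex v → ∀ w ∈ γ, Λ.Conn v w → v ∈ γ)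

end KGraph

namespace KGraph

section ProductGraph

variable {k₁ k₂ : ℕ}

private lemma fin_append_zero :
    Fin.append (0 : Fin k₁ → ℕ) (0 : Fin k₂ → ℕ) = 0 := by
  funext i
  refine Fin.addCases (fun j => ?_) (fun j => ?_) i <;>
    simp [Fin.append_left, Fin.append_right]

private lemma fin_append_add (f f' : Fin k₁ → ℕ) (g g' : Fin k₂ → ℕ) :
    Fin.append (f + f') (g + g') = Fin.append f g + Fin.append f' g' := by
  funext i
  refine Fin.addCases (fun j => ?_) (fun j => ?_) i <;>
    simp [Fin.append_left, Fin.append_right]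

private lemma fin_append_restrict (m : Fin (k₁ + k₂) → ℕ) :
    Fin.append (fun i => m (Fin.castAdd k₂ i)) (fun j => m (Fin.natAdd k₁ j)) = m := by
  funext i
  refine Fin.addCases (fun j => ?_) (fun j => ?_) i <;>
    simp [Fin.append_left, Fin.append_right]

/-- The cartesian product of a `k₁`-graph and a `k₂`-graph, a `(k₁+k₂)`-graph. -/
noncomputable def prod (Λ₁ : KGraph k₁) (Λ₂ : KGraph k₂) : KGraph (k₁ + k₂) where
  Path := Λ₁.Path × Λ₂.Path
  countable := by have := Λ₁.countable; have := Λ₂.countable; exact inferInstance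
  nonempty := by have := Λ₁.nonempty; have := Λ₂.nonempty; exact inferInstance
  r := fun p => (Λ₁.r p.1, Λ₂.r p.2)
  s := fun p => (Λ₁.s p.1, Λ₂.s p.2)
  comp := fun p q => (Λ₁.comp p.1 q.1, Λ₂.comp p.2 q.2)
  d := fun p => Fin.append (Λ₁.d p.1) (Λ₂.d p.2)
  d_r := fun p => by dsimp only; rw [Λ₁.d_r, Λ₂.d_r]; exact fin_append_zero
  d_s := fun p => by dsimp only; rw [Λ₁.d_s, Λ₂.d_s]; exact fin_append_zero
  r_r := fun p => by dsimp only; rw [Λ₁.r_r, Λ₂.r_r]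
  s_r := fun p => by dsimp only; rw [Λ₁.s_r, Λ₂.s_r]
  r_s := fun p => by dsimp only; rw [Λ₁.r_s, Λ₂.r_s]
  s_s := fun p => by dsimp only; rw [Λ₁.s_s, Λ₂.s_s]
  id_comp := fun p => by dsimp only; rw [Λ₁.id_comp, Λ₂.id_comp]
  comp_id := fun p => by dsimp only; rw [Λ₁.comp_id, Λ₂.comp_id]
  r_comp := fun p q h => by
    dsimp only
    have h1 : Λ₁.s p.1 = Λ₁.r q.1 := congrArg Prod.fst h
    have h2 : Λ₂.s p.2 = Λ₂.r q.2 := congrArg Prod.snd h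
    rw [Λ₁.r_comp _ _ h1, Λ₂.r_comp _ _ h2]
  s_comp := fun p q h => by
    dsimp only
    have h1 : Λ₁.s p.1 = Λ₁.r q.1 := congrArg Prod.fst h
    have h2 : Λ₂.s p.2 = Λ₂.r q.2 := congrArg Prod.snd h
    rw [Λ₁.s_comp _ _ h1, Λ₂.s_comp _ _ h2]
  d_comp := fun p q h => by
    dsimp only
    have h1 : Λ₁.s p.1 = Λ₁.r q.1 := congrArg Prod.fst h
    have h2 : Λ₂.s p.2 = Λ₂.r q.2 := congrArg Prod.snd h
    rw [Λ₁.d_comp _ _ h1, Λ₂.d_comp _ _ h2, fin_append_add]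
  comp_assoc := fun p q t h h' => by
    dsimp only
    have h1 : Λ₁.s p.1 = Λ₁.r q.1 := congrArg Prod.fst h
    have h2 : Λ₂.s p.2 = Λ₂.r q.2 := congrArg Prod.snd h
    have h1' : Λ₁.s q.1 = Λ₁.r t.1 := congrArg Prod.fst h'
    have h2' : Λ₂.s q.2 = Λ₂.r t.2 := congrArg Prod.snd h'
    rw [Λ₁.comp_assoc _ _ _ h1 h1', Λ₂.comp_assoc _ _ _ h2 h2']
  factor := fun p m n hmn => by
    have h1 : Λ₁.d p.1 =
        (fun i => m (Fin.castAdd k₂ i)) + (fun i => n (Fin.castAdd k₂ i)) := by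
      funext i
      have := congrFun hmn (Fin.castAdd k₂ i)
      simpa [Fin.append_left] using this
    have h2 : Λ₂.d p.2 =
        (fun j => m (Fin.natAdd k₁ j)) + (fun j => n (Fin.natAdd k₁ j)) := by
      funext j
      have := congrFun hmn (Fin.natAdd k₁ j)
      simpa [Fin.append_right] using this
    obtain ⟨q₁, ⟨hq₁s, hq₁c, hq₁m, hq₁n⟩, hq₁u⟩ := Λ₁.factor p.1 _ _ h1
    obtain ⟨q₂, ⟨hq₂s, hq₂c, hq₂m, hq₂n⟩, hq₂u⟩ := Λ₂.factor p.2 _ _ h2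
    refine ⟨((q₁.1, q₂.1), (q₁.2, q₂.2)), ⟨?_, ?_, ?_, ?_⟩, ?_⟩
    · show (Λ₁.s q₁.1, Λ₂.s q₂.1) = (Λ₁.r q₁.2, Λ₂.r q₂.2)
      rw [hq₁s, hq₂s]
    · show (Λ₁.comp q₁.1 q₁.2, Λ₂.comp q₂.1 q₂.2) = p
      rw [hq₁c, hq₂c]
    · show Fin.append (Λ₁.d q₁.1) (Λ₂.d q₂.1) = m
      rw [hq₁m, hq₂m]; exact fin_append_restrict m
    · show Fin.append (Λ₁.d q₁.2) (Λ₂.d q₂.2) = n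
      rw [hq₁n, hq₂n]; exact fin_append_restrict n
    · rintro ⟨⟨a, b⟩, ⟨c, e⟩⟩ ⟨hs, hc, hm, hn⟩
      have hs1 : Λ₁.s a = Λ₁.r c := congrArg Prod.fst hs
      have hs2 : Λ₂.s b = Λ₂.r e := congrArg Prod.snd hs
      have hc1 : Λ₁.comp a c = p.1 := congrArg Prod.fst hc
      have hc2 : Λ₂.comp b e = p.2 := congrArg Prod.snd hc
      have hm1 : Λ₁.d a = fun i => m (Fin.castAdd k₂ i) := by
        funext i
        have := congrFun hm (Fin.castAdd k₂ i)
        simpa [Fin.append_left] using this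
      have hm2 : Λ₂.d b = fun j => m (Fin.natAdd k₁ j) := by
        funext j
        have := congrFun hm (Fin.natAdd k₁ j)
        simpa [Fin.append_right] using this
      have hn1 : Λ₁.d c = fun i => n (Fin.castAdd k₂ i) := by
        funext i
        have := congrFun hn (Fin.castAdd k₂ i)
        simpa [Fin.append_left] using this
      have hn2 : Λ₂.d e = fun j => n (Fin.natAdd k₁ j) := by
        funext j
        have := congrFun hn (Fin.natAdd k₁ j)
        simpa [Fin.append_right] using this
      have e1 : (a, c) = q₁ := hq₁u (a, c) ⟨hs1, hc1, hm1, hn1⟩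
      have e2 : (b, e) = q₂ := hq₂u (b, e) ⟨hs2, hc2, hm2, hn2⟩
      have ea : a = q₁.1 := congrArg Prod.fst e1
      have ec : c = q₁.2 := congrArg Prod.snd e1
      have eb : b = q₂.1 := congrArg Prod.fst e2
      have ee : e = q₂.2 := congrArg Prod.snd e2
      subst ea; subst ec; subst eb; subst ee
      rfl

end ProductGraph

end KGraph

/-!
If `H₁ ⊆ Λ₁⁰` is saturated hereditary, then so is the set of vertices of `Λ₁ × Λ₂` whose
first coordinate lies in `H₁`, and a path of `Λ₁ × Λ₂` separating the degrees `(m, 0)` and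
`(n, 0)` projects to a path of `Λ₁` separating `m` and `n`, because the middle factors of a
product path are the pairs of middle factors of its components. Conversely, let `H` be
saturated hereditary in `Λ₁ × Λ₂` and let `m ≠ n` differ in the first block. The slices of
`H` are saturated, so from `(v₁, v₂) ∉ H` one can first move in `Λ₂` by a path of the
required second-block degree without entering `H`, and then apply strong aperiodicity of
`Λ₁` relative to the slice of `H` at the vertex reached.
-/

namespace Fin

variable {m n : ℕ} {α : Type*}

theorem append_inj_iff {a c : Fin m → α} {b d : Fin n → α} :
    append a b = append c d ↔ a = c ∧ b = d :=
  ⟨fun h => Prod.mk.inj ((appendEquiv m n).injective h), fun ⟨hac, hbd⟩ => hac ▸ hbd ▸ rfl⟩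

theorem append_le_append_iff [LE α] {a c : Fin m → α} {b d : Fin n → α} :
    append a b ≤ append c d ↔ a ≤ c ∧ b ≤ d := by
  simp only [Pi.le_def, forall_fin_add, append_left, append_right]

theorem append_sub [Sub α] (a c : Fin m → α) (b d : Fin n → α) :
    append (a - c) (b - d) = append a b - append c d := by
  ext i; induction i using addCases <;> simp

theorem append_sup [Max α] (a c : Fin m → α) (b d : Fin n → α) :
    append (a ⊔ c) (b ⊔ d) = append a b ⊔ append c d := by
  ext i; induction i using addCases <;> simp

theorem single_castAdd [Zero α] (i : Fin m) (x : α) :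
    Pi.single (castAdd n i) x = append (Pi.single i x) (0 : Fin n → α) := by
  ext j; induction j using addCases <;> simp [Pi.single_apply, Fin.ext_iff]; omega

theorem single_natAdd [Zero α] (i : Fin n) (x : α) :
    Pi.single (natAdd m i) x = append (0 : Fin m → α) (Pi.single i x) := by
  ext j; induction j using addCases <;> simp [Pi.single_apply, Fin.ext_iff]; omega

end Fin

namespace KGraph

section Basic

variable {k : ℕ} (Λ : KGraph k)

theorem comp_inj {μ ν μ' ν' : Λ.Path} (h : Λ.s μ = Λ.r ν) (h' : Λ.s μ' = Λ.r ν')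
    (hcomp : Λ.comp μ ν = Λ.comp μ' ν') (hd : Λ.d μ = Λ.d μ') : μ = μ' ∧ ν = ν' := by
  have hd' : Λ.d ν' = Λ.d ν := by
    have := Λ.d_comp _ _ h'
    rw [← hcomp, Λ.d_comp _ _ h, hd] at this
    exact (add_left_cancel this).symm
  obtain ⟨_, _, huniq⟩ := Λ.factor (Λ.comp μ ν) (Λ.d μ) (Λ.d ν) (Λ.d_comp _ _ h)
  exact Prod.mk.inj ((huniq (μ, ν) ⟨h, rfl, rfl, rfl⟩).trans
    (huniq (μ', ν') ⟨h', hcomp.symm, hd.symm, hd'⟩).symm)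

theorem r_and_s_of_isVertex {v : Λ.Path} (hv : Λ.IsVertex v) : Λ.r v = v ∧ v = Λ.s v :=
  Λ.comp_inj (Λ.s_r v) (Λ.r_s v).symm ((Λ.id_comp v).trans (Λ.comp_id v).symm)
    ((Λ.d_r v).trans hv.symm)

theorem r_of_isVertex {v : Λ.Path} (hv : Λ.IsVertex v) : Λ.r v = v :=
  (Λ.r_and_s_of_isVertex hv).1

theorem s_of_isVertex {v : Λ.Path} (hv : Λ.IsVertex v) : Λ.s v = v :=
  (Λ.r_and_s_of_isVertex hv).2.symm

theorem isVertex_s (lam : Λ.Path) : Λ.IsVertex (Λ.s lam) := Λ.d_s lam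

def IsSeg (lam : Λ.Path) (m n : Fin k → ℕ) (sig : Λ.Path) : Prop :=
  ∃ mu tau, Λ.s mu = Λ.r sig ∧ Λ.s sig = Λ.r tau ∧
    Λ.comp (Λ.comp mu sig) tau = lam ∧ Λ.d mu = m ∧ Λ.d sig = n - m ∧
    Λ.d tau = Λ.d lam - n

variable {Λ} in
theorem IsSeg.unique {lam sig sig' : Λ.Path} {m n : Fin k → ℕ}
    (h : Λ.IsSeg lam m n sig) (h' : Λ.IsSeg lam m n sig') : sig = sig' := by
  obtain ⟨mu, tau, hms, hst, hlam, hmu, hsig, -⟩ := h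
  obtain ⟨mu', tau', hms', hst', hlam', hmu', hsig', -⟩ := h'
  have hhead := Λ.comp_inj (μ := Λ.comp mu sig) (μ' := Λ.comp mu' sig')
    (by rw [Λ.s_comp _ _ hms, hst]) (by rw [Λ.s_comp _ _ hms', hst'])
    (hlam.trans hlam'.symm)
    (by rw [Λ.d_comp _ _ hms, Λ.d_comp _ _ hms', hmu, hsig, hmu', hsig'])
  exact (Λ.comp_inj hms hms' hhead.1 (hmu.trans hmu'.symm)).2

theorem seg_eq_of_isSeg {lam sig : Λ.Path} {m n : Fin k → ℕ} (h : Λ.IsSeg lam m n sig) :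
    Λ.seg lam m n = sig := by
  have hex : ∃ sig, Λ.IsSeg lam m n sig := ⟨sig, h⟩
  exact (dif_pos hex).trans (hex.choose_spec.unique h)

theorem exists_isSeg {lam : Λ.Path} {m n : Fin k → ℕ} (hmn : m ≤ n) (hn : n ≤ Λ.d lam) :
    ∃ sig, Λ.IsSeg lam m n sig := by
  obtain ⟨⟨mu, rho⟩, ⟨hmr, hlam, hmu, hrho⟩, -⟩ :=
    Λ.factor lam m (Λ.d lam - m) (add_tsub_cancel_of_le (hmn.trans hn)).symm
  have hrho' : Λ.d rho = (n - m) + (Λ.d lam - n) := by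
    rw [hrho, ← tsub_add_tsub_cancel hn hmn, add_comm]
  obtain ⟨⟨sig, tau⟩, ⟨hst, hrho, hsig, htau⟩, -⟩ := Λ.factor rho _ _ hrho'
  have hms : Λ.s mu = Λ.r sig := by rw [hmr, ← hrho, Λ.r_comp _ _ hst]
  refine ⟨sig, mu, tau, hms, hst, ?_, hmu, hsig, htau⟩
  rw [Λ.comp_assoc _ _ _ hms hst, hrho, hlam]

def Avoidable (S : Set Λ.Path) (n : Fin k → ℕ) : Prop :=
  ∀ v, Λ.IsVertex v → v ∉ S → ∃ lam, Λ.r lam = v ∧ Λ.d lam = n ∧ Λ.s lam ∉ S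

theorem avoidable_zero (S : Set Λ.Path) : Λ.Avoidable S 0 :=
  fun v hv hvS => ⟨v, Λ.r_of_isVertex hv, hv, by rwa [Λ.s_of_isVertex hv]⟩

variable {Λ}

theorem Avoidable.add {S : Set Λ.Path} {f g : Fin k → ℕ} (hf : Λ.Avoidable S f)
    (hg : Λ.Avoidable S g) : Λ.Avoidable S (f + g) := by
  intro v hv hvS
  obtain ⟨μ, hμr, hμd, hμs⟩ := hf v hv hvS
  obtain ⟨ν, hνr, hνd, hνs⟩ := hg _ (Λ.isVertex_s μ) hμs
  refine ⟨Λ.comp μ ν, ?_, ?_, ?_⟩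
  · rw [Λ.r_comp _ _ hνr.symm, hμr]
  · rw [Λ.d_comp _ _ hνr.symm, hμd, hνd]
  · rwa [Λ.s_comp _ _ hνr.symm]

theorem Saturated.avoidable_eVec {S : Set Λ.Path} (hS : Λ.Saturated S) (i : Fin k) :
    Λ.Avoidable S (eVec k i) := by
  intro v hv hvS
  by_contra! h
  exact hvS (hS v hv ⟨v, Λ.r_of_isVertex hv⟩ ⟨i, h⟩)

theorem Saturated.avoidable {S : Set Λ.Path} (hS : Λ.Saturated S) (n : Fin k → ℕ) :
    Λ.Avoidable S n := by
  induction n using Pi.single_induction with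
  | zero => exact Λ.avoidable_zero S
  | add f g hf hg => exact hf.add hg
  | single i m =>
    induction m with
    | zero => simpa using Λ.avoidable_zero S
    | succ m ih => simpa [Pi.single_add, eVec] using ih.add (hS.avoidable_eVec i)

variable (Λ)

def Distinguishes (lam : Λ.Path) (m n : Fin k → ℕ) : Prop :=
  Λ.seg lam m (m + Λ.d lam - (m ⊔ n)) ≠ Λ.seg lam n (n + Λ.d lam - (m ⊔ n))

theorem not_distinguishes_self (lam : Λ.Path) (m : Fin k → ℕ) : ¬Λ.Distinguishes lam m m :=
  fun h => h rfl

theorem exists_isVertex : ∃ v, Λ.IsVertex v := ⟨Λ.r Λ.nonempty.some, Λ.d_r _⟩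

theorem ne_setOf_isVertex {S : Set Λ.Path} {v : Λ.Path} (hv : Λ.IsVertex v) (hvS : v ∉ S) :
    S ≠ {v | Λ.IsVertex v} :=
  fun h => hvS (h ▸ hv)

theorem hereditary_empty : Λ.Hereditary ∅ := fun _ h => h.elim

theorem saturated_empty (h : Λ.NoSources) : Λ.Saturated ∅ := by
  rintro v hv - ⟨i, hi⟩
  obtain ⟨e, hr, hd⟩ := h v hv i
  exact hi e hr hd

end Basic

section Product

-- `(Λ₁.prod Λ₂).Path` is a product type only up to unfolding `prod`, so equations between
-- pairs of paths are proved with `Prod.ext` and `congrArg Prod.fst` rather than by `simp`.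
variable {k₁ k₂ : ℕ} {Λ₁ : KGraph k₁} {Λ₂ : KGraph k₂}

theorem prod_d (p : (Λ₁.prod Λ₂).Path) :
    (Λ₁.prod Λ₂).d p = Fin.append (Λ₁.d p.1) (Λ₂.d p.2) := rfl

theorem prod_isVertex_iff {p : (Λ₁.prod Λ₂).Path} :
    (Λ₁.prod Λ₂).IsVertex p ↔ Λ₁.IsVertex p.1 ∧ Λ₂.IsVertex p.2 := by
  rw [IsVertex, prod_d, ← fin_append_zero, Fin.append_inj_iff]
  rfl

theorem prod_d_eq_eVec_castAdd_iff {p : (Λ₁.prod Λ₂).Path} {i : Fin k₁} :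
    (Λ₁.prod Λ₂).d p = eVec (k₁ + k₂) (Fin.castAdd k₂ i) ↔
      Λ₁.d p.1 = eVec k₁ i ∧ Λ₂.IsVertex p.2 := by
  rw [eVec, Fin.single_castAdd, prod_d, Fin.append_inj_iff]
  rfl

theorem prod_d_eq_eVec_natAdd_iff {p : (Λ₁.prod Λ₂).Path} {i : Fin k₂} :
    (Λ₁.prod Λ₂).d p = eVec (k₁ + k₂) (Fin.natAdd k₁ i) ↔
      Λ₁.IsVertex p.1 ∧ Λ₂.d p.2 = eVec k₂ i := by
  rw [eVec, Fin.single_natAdd, prod_d, Fin.append_inj_iff]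
  rfl

theorem IsSeg.prod {l σ : (Λ₁.prod Λ₂).Path} {m₁ n₁ : Fin k₁ → ℕ} {m₂ n₂ : Fin k₂ → ℕ}
    (h₁ : Λ₁.IsSeg l.1 m₁ n₁ σ.1) (h₂ : Λ₂.IsSeg l.2 m₂ n₂ σ.2) :
    (Λ₁.prod Λ₂).IsSeg l (Fin.append m₁ m₂) (Fin.append n₁ n₂) σ := by
  obtain ⟨μ₁, τ₁, hμ₁, hσ₁, hl₁, hdμ₁, hdσ₁, hdτ₁⟩ := h₁
  obtain ⟨μ₂, τ₂, hμ₂, hσ₂, hl₂, hdμ₂, hdσ₂, hdτ₂⟩ := h₂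
  exact ⟨(μ₁, μ₂), (τ₁, τ₂), Prod.ext hμ₁ hμ₂, Prod.ext hσ₁ hσ₂, Prod.ext hl₁ hl₂,
    congrArg₂ Fin.append hdμ₁ hdμ₂, (congrArg₂ Fin.append hdσ₁ hdσ₂).trans (Fin.append_sub ..),
    (congrArg₂ Fin.append hdτ₁ hdτ₂).trans (Fin.append_sub ..)⟩

theorem prod_seg (l : (Λ₁.prod Λ₂).Path) {m₁ n₁ : Fin k₁ → ℕ} {m₂ n₂ : Fin k₂ → ℕ}
    (hm₁ : m₁ ≤ n₁) (hn₁ : n₁ ≤ Λ₁.d l.1) (hm₂ : m₂ ≤ n₂) (hn₂ : n₂ ≤ Λ₂.d l.2) :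
    (Λ₁.prod Λ₂).seg l (Fin.append m₁ m₂) (Fin.append n₁ n₂) =
      (Λ₁.seg l.1 m₁ n₁, Λ₂.seg l.2 m₂ n₂) := by
  obtain ⟨σ₁, h₁⟩ := Λ₁.exists_isSeg hm₁ hn₁
  obtain ⟨σ₂, h₂⟩ := Λ₂.exists_isSeg hm₂ hn₂
  rw [Λ₁.seg_eq_of_isSeg h₁, Λ₂.seg_eq_of_isSeg h₂]
  exact seg_eq_of_isSeg _ (IsSeg.prod (σ := ((σ₁, σ₂) : (Λ₁.prod Λ₂).Path)) h₁ h₂)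

theorem prod_seg_window (l : (Λ₁.prod Λ₂).Path) {q₁ b₁ : Fin k₁ → ℕ} {q₂ b₂ : Fin k₂ → ℕ}
    (hq₁ : q₁ ≤ b₁) (hb₁ : b₁ ≤ Λ₁.d l.1) (hq₂ : q₂ ≤ b₂) (hb₂ : b₂ ≤ Λ₂.d l.2) :
    (Λ₁.prod Λ₂).seg l (Fin.append q₁ q₂)
        (Fin.append q₁ q₂ + (Λ₁.prod Λ₂).d l - Fin.append b₁ b₂) =
      (Λ₁.seg l.1 q₁ (q₁ + Λ₁.d l.1 - b₁), Λ₂.seg l.2 q₂ (q₂ + Λ₂.d l.2 - b₂)) := by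
  have window : ∀ {n : ℕ} {q b d : Fin n → ℕ}, q ≤ b → b ≤ d → q ≤ q + d - b ∧ q + d - b ≤ d :=
    fun hq hb => ⟨by rw [add_tsub_assoc_of_le hb]; exact le_self_add,
      tsub_le_iff_right.2 (by rw [add_comm]; gcongr)⟩
  rw [prod_d, ← fin_append_add, ← Fin.append_sub]
  exact prod_seg _ (window hq₁ hb₁).1 (window hq₁ hb₁).2 (window hq₂ hb₂).1
    (window hq₂ hb₂).2

theorem prod_distinguishes_iff (l : (Λ₁.prod Λ₂).Path) {m₁ n₁ : Fin k₁ → ℕ}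
    {m₂ n₂ : Fin k₂ → ℕ} (h₁ : m₁ ⊔ n₁ ≤ Λ₁.d l.1) (h₂ : m₂ ⊔ n₂ ≤ Λ₂.d l.2) :
    (Λ₁.prod Λ₂).Distinguishes l (Fin.append m₁ m₂) (Fin.append n₁ n₂) ↔
      Λ₁.Distinguishes l.1 m₁ n₁ ∨ Λ₂.Distinguishes l.2 m₂ n₂ := by
  rw [Distinguishes, Distinguishes, Distinguishes, ← Fin.append_sup,
    prod_seg_window _ le_sup_left h₁ le_sup_left h₂,
    prod_seg_window _ le_sup_right h₁ le_sup_right h₂]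
  exact Prod.ext_iff.not.trans not_and_or

theorem exists_prod_witness_iff {H : Set (Λ₁.prod Λ₂).Path} {v₁ : Λ₁.Path} {v₂ : Λ₂.Path}
    {m₁ n₁ : Fin k₁ → ℕ} {m₂ n₂ : Fin k₂ → ℕ} :
    (∃ lam, (Λ₁.prod Λ₂).r lam = (v₁, v₂) ∧ (Λ₁.prod Λ₂).s lam ∉ H ∧
        Fin.append m₁ m₂ ⊔ Fin.append n₁ n₂ ≤ (Λ₁.prod Λ₂).d lam ∧
        (Λ₁.prod Λ₂).Distinguishes lam (Fin.append m₁ m₂) (Fin.append n₁ n₂)) ↔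
      ∃ l₁ l₂, Λ₁.r l₁ = v₁ ∧ Λ₂.r l₂ = v₂ ∧
        ((Λ₁.s l₁, Λ₂.s l₂) : (Λ₁.prod Λ₂).Path) ∉ H ∧ m₁ ⊔ n₁ ≤ Λ₁.d l₁ ∧
        m₂ ⊔ n₂ ≤ Λ₂.d l₂ ∧ (Λ₁.Distinguishes l₁ m₁ n₁ ∨ Λ₂.Distinguishes l₂ m₂ n₂) := by
  have hle : ∀ lam : (Λ₁.prod Λ₂).Path,
      Fin.append m₁ m₂ ⊔ Fin.append n₁ n₂ ≤ (Λ₁.prod Λ₂).d lam ↔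
        m₁ ⊔ n₁ ≤ Λ₁.d lam.1 ∧ m₂ ⊔ n₂ ≤ Λ₂.d lam.2 := fun _ => by
    rw [← Fin.append_sup, prod_d, Fin.append_le_append_iff]
  constructor
  · rintro ⟨l, hr, hs, hd, hdist⟩
    obtain ⟨hd₁, hd₂⟩ := (hle l).1 hd
    exact ⟨l.1, l.2, congrArg Prod.fst hr, congrArg Prod.snd hr, hs, hd₁, hd₂,
      (prod_distinguishes_iff l hd₁ hd₂).1 hdist⟩
  · rintro ⟨l₁, l₂, hr₁, hr₂, hs, hd₁, hd₂, hdist⟩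
    exact ⟨(l₁, l₂), Prod.ext hr₁ hr₂, hs, (hle (l₁, l₂)).2 ⟨hd₁, hd₂⟩,
      (prod_distinguishes_iff ((l₁, l₂) : (Λ₁.prod Λ₂).Path) hd₁ hd₂).2 hdist⟩

end Product

section Slices

variable {k₁ k₂ : ℕ} {Λ₁ : KGraph k₁} {Λ₂ : KGraph k₂} {H : Set (Λ₁.prod Λ₂).Path}

theorem Saturated.slice_fst (hS : (Λ₁.prod Λ₂).Saturated H) {v₂ : Λ₂.Path}
    (hv₂ : Λ₂.IsVertex v₂) : Λ₁.Saturated {w | ((w, v₂) : (Λ₁.prod Λ₂).Path) ∈ H} := by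
  rintro v₁ hv₁ - ⟨i, hi⟩
  refine hS (v₁, v₂) (prod_isVertex_iff.2 ⟨hv₁, hv₂⟩)
    ⟨(v₁, v₂), Prod.ext (Λ₁.r_of_isVertex hv₁) (Λ₂.r_of_isVertex hv₂)⟩ ⟨Fin.castAdd k₂ i, ?_⟩
  rintro ⟨f, b⟩ hr hd
  obtain ⟨hdf, hb⟩ := prod_d_eq_eVec_castAdd_iff.1 hd
  obtain rfl : b = v₂ := (Λ₂.r_of_isVertex hb).symm.trans (congrArg Prod.snd hr)
  have hs : ((Λ₁.s f, Λ₂.s b) : (Λ₁.prod Λ₂).Path) ∈ H := by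
    rw [Λ₂.s_of_isVertex hb]
    exact hi f (congrArg Prod.fst hr) hdf
  exact hs

theorem Saturated.slice_snd (hS : (Λ₁.prod Λ₂).Saturated H) {v₁ : Λ₁.Path}
    (hv₁ : Λ₁.IsVertex v₁) : Λ₂.Saturated {w | ((v₁, w) : (Λ₁.prod Λ₂).Path) ∈ H} := by
  rintro v₂ hv₂ - ⟨i, hi⟩
  refine hS (v₁, v₂) (prod_isVertex_iff.2 ⟨hv₁, hv₂⟩)
    ⟨(v₁, v₂), Prod.ext (Λ₁.r_of_isVertex hv₁) (Λ₂.r_of_isVertex hv₂)⟩ ⟨Fin.natAdd k₁ i, ?_⟩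
  rintro ⟨a, g⟩ hr hd
  obtain ⟨ha, hdg⟩ := prod_d_eq_eVec_natAdd_iff.1 hd
  obtain rfl : a = v₁ := (Λ₁.r_of_isVertex ha).symm.trans (congrArg Prod.fst hr)
  have hs : ((Λ₁.s a, Λ₂.s g) : (Λ₁.prod Λ₂).Path) ∈ H := by
    rw [Λ₁.s_of_isVertex ha]
    exact hi g (congrArg Prod.snd hr) hdg
  exact hs

theorem Hereditary.slice_fst (hH : (Λ₁.prod Λ₂).Hereditary H) {v₂ : Λ₂.Path}
    (hv₂ : Λ₂.IsVertex v₂) : Λ₁.Hereditary {w | ((w, v₂) : (Λ₁.prod Λ₂).Path) ∈ H} :=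
  fun _ hw _ ⟨f, hr, hs⟩ => hH _ hw _
    ⟨(f, v₂), Prod.ext hr (Λ₂.r_of_isVertex hv₂), Prod.ext hs (Λ₂.s_of_isVertex hv₂)⟩

theorem Hereditary.slice_snd (hH : (Λ₁.prod Λ₂).Hereditary H) {v₁ : Λ₁.Path}
    (hv₁ : Λ₁.IsVertex v₁) : Λ₂.Hereditary {w | ((v₁, w) : (Λ₁.prod Λ₂).Path) ∈ H} :=
  fun _ hw _ ⟨g, hr, hs⟩ => hH _ hw _
    ⟨(v₁, g), Prod.ext (Λ₁.r_of_isVertex hv₁) hr, Prod.ext (Λ₁.s_of_isVertex hv₁) hs⟩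

end Slices

section StrongAperiodicity

variable {k₁ k₂ : ℕ} {Λ₁ : KGraph k₁} {Λ₂ : KGraph k₂}

/-- The vertices of `Λ₁ × Λ₂` outside `(Λ₁⁰ \ H₁) × (Λ₂⁰ \ H₂)`, so that
`Γ((Λ₁ × Λ₂) \ unionProd H₁ H₂) = Γ(Λ₁ \ H₁) × Γ(Λ₂ \ H₂)`. -/
def unionProd (H₁ : Set Λ₁.Path) (H₂ : Set Λ₂.Path) : Set (Λ₁.prod Λ₂).Path :=
  {p | (Λ₁.prod Λ₂).IsVertex p ∧ (p.1 ∈ H₁ ∨ p.2 ∈ H₂)}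

variable {H₁ : Set Λ₁.Path} {H₂ : Set Λ₂.Path}

theorem Hereditary.unionProd (hH₁ : Λ₁.Hereditary H₁) (hH₂ : Λ₂.Hereditary H₂) :
    (Λ₁.prod Λ₂).Hereditary (unionProd H₁ H₂) := by
  rintro v ⟨-, hv⟩ w ⟨lam, hr, hs⟩
  refine ⟨hs ▸ (Λ₁.prod Λ₂).isVertex_s lam, ?_⟩
  exact hv.imp (fun h => hH₁ _ h _ ⟨lam.1, congrArg Prod.fst hr, congrArg Prod.fst hs⟩)
    (fun h => hH₂ _ h _ ⟨lam.2, congrArg Prod.snd hr, congrArg Prod.snd hs⟩)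

theorem Saturated.unionProd (hS₁ : Λ₁.Saturated H₁) (hS₂ : Λ₂.Saturated H₂) :
    (Λ₁.prod Λ₂).Saturated (unionProd H₁ H₂) := by
  rintro ⟨a, b⟩ hv - ⟨i, hi⟩
  obtain ⟨ha, hb⟩ := prod_isVertex_iff.1 hv
  refine ⟨hv, ?_⟩
  induction i using Fin.addCases with
  | left i =>
    refine or_iff_not_imp_right.2 fun hbH => hS₁ a ha ⟨a, Λ₁.r_of_isVertex ha⟩ ⟨i, ?_⟩
    intro f hr hd
    have hfb : Λ₁.s f ∈ H₁ ∨ Λ₂.s b ∈ H₂ :=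
      (hi (f, b) (Prod.ext hr (Λ₂.r_of_isVertex hb))
        (prod_d_eq_eVec_castAdd_iff.2 ⟨hd, hb⟩)).2
    rw [Λ₂.s_of_isVertex hb] at hfb
    exact hfb.resolve_right hbH
  | right i =>
    refine or_iff_not_imp_left.2 fun haH => hS₂ b hb ⟨b, Λ₂.r_of_isVertex hb⟩ ⟨i, ?_⟩
    intro g hr hd
    have hag : Λ₁.s a ∈ H₁ ∨ Λ₂.s g ∈ H₂ :=
      (hi (a, g) (Prod.ext (Λ₁.r_of_isVertex ha) hr)
        (prod_d_eq_eVec_natAdd_iff.2 ⟨ha, hd⟩)).2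
    rw [Λ₁.s_of_isVertex ha] at hag
    exact hag.resolve_left haH

theorem QuotNoLocalPeriodicity.of_unionProd {v₁ : Λ₁.Path} {v₂ : Λ₂.Path}
    (h : (Λ₁.prod Λ₂).QuotNoLocalPeriodicity (unionProd H₁ H₂) (v₁, v₂)) :
    Λ₁.QuotNoLocalPeriodicity H₁ v₁ ∧ Λ₂.QuotNoLocalPeriodicity H₂ v₂ := by
  have witness : ∀ {m₁ n₁ : Fin k₁ → ℕ} {m₂ n₂ : Fin k₂ → ℕ},
      Fin.append m₁ m₂ ≠ Fin.append n₁ n₂ → ∃ l₁ l₂, Λ₁.r l₁ = v₁ ∧ Λ₂.r l₂ = v₂ ∧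
        Λ₁.s l₁ ∉ H₁ ∧ Λ₂.s l₂ ∉ H₂ ∧ m₁ ⊔ n₁ ≤ Λ₁.d l₁ ∧ m₂ ⊔ n₂ ≤ Λ₂.d l₂ ∧
        (Λ₁.Distinguishes l₁ m₁ n₁ ∨ Λ₂.Distinguishes l₂ m₂ n₂) := fun hmn => by
    obtain ⟨l₁, l₂, hr₁, hr₂, hs, hd₁, hd₂, hdist⟩ := exists_prod_witness_iff.1 (h _ _ hmn)
    have hsv : (Λ₁.prod Λ₂).IsVertex (Λ₁.s l₁, Λ₂.s l₂) :=
      prod_isVertex_iff.2 ⟨Λ₁.isVertex_s l₁, Λ₂.isVertex_s l₂⟩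
    exact ⟨l₁, l₂, hr₁, hr₂, fun h => hs ⟨hsv, .inl h⟩, fun h => hs ⟨hsv, .inr h⟩, hd₁, hd₂,
      hdist⟩
  constructor
  · intro m n hmn
    obtain ⟨l₁, l₂, hr₁, -, hs₁, -, hd₁, -, hdist⟩ :=
      witness (m₂ := 0) (n₂ := 0) fun h => hmn (Fin.append_inj_iff.1 h).1
    exact ⟨l₁, hr₁, hs₁, hd₁, hdist.resolve_right (Λ₂.not_distinguishes_self l₂ 0)⟩
  · intro m n hmn
    obtain ⟨l₁, l₂, -, hr₂, -, hs₂, -, hd₂, hdist⟩ :=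
      witness (m₁ := 0) (n₁ := 0) fun h => hmn (Fin.append_inj_iff.1 h).2
    exact ⟨l₂, hr₂, hs₂, hd₂, hdist.resolve_left (Λ₁.not_distinguishes_self l₁ 0)⟩

theorem StronglyAperiodic.quotNoLocalPeriodicity_of_prod
    (hP : (Λ₁.prod Λ₂).StronglyAperiodic) (hH₁ : Λ₁.Hereditary H₁) (hS₁ : Λ₁.Saturated H₁)
    (hH₂ : Λ₂.Hereditary H₂) (hS₂ : Λ₂.Saturated H₂) {v₁ : Λ₁.Path} {v₂ : Λ₂.Path}
    (hv₁ : Λ₁.IsVertex v₁) (hv₂ : Λ₂.IsVertex v₂) (hv₁H : v₁ ∉ H₁) (hv₂H : v₂ ∉ H₂) :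
    Λ₁.QuotNoLocalPeriodicity H₁ v₁ ∧ Λ₂.QuotNoLocalPeriodicity H₂ v₂ := by
  have hv : (Λ₁.prod Λ₂).IsVertex (v₁, v₂) := prod_isVertex_iff.2 ⟨hv₁, hv₂⟩
  have hvH : ((v₁, v₂) : (Λ₁.prod Λ₂).Path) ∉ unionProd H₁ H₂ :=
    fun h => h.2.elim hv₁H hv₂H
  exact QuotNoLocalPeriodicity.of_unionProd <| hP _ (fun _ h => h.1) (hH₁.unionProd hH₂)
    (hS₁.unionProd hS₂) ((Λ₁.prod Λ₂).ne_setOf_isVertex hv hvH) _ hv hvH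

theorem StronglyAperiodic.fst_of_prod (hP : (Λ₁.prod Λ₂).StronglyAperiodic)
    (h₂ : Λ₂.NoSources) : Λ₁.StronglyAperiodic := by
  rintro H₁ - hH₁ hS₁ - v₁ hv₁ hv₁H
  obtain ⟨v₂, hv₂⟩ := Λ₂.exists_isVertex
  exact (hP.quotNoLocalPeriodicity_of_prod hH₁ hS₁ Λ₂.hereditary_empty (Λ₂.saturated_empty h₂)
    hv₁ hv₂ hv₁H (Set.notMem_empty v₂)).1

theorem StronglyAperiodic.snd_of_prod (hP : (Λ₁.prod Λ₂).StronglyAperiodic)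
    (h₁ : Λ₁.NoSources) : Λ₂.StronglyAperiodic := by
  rintro H₂ - hH₂ hS₂ - v₂ hv₂ hv₂H
  obtain ⟨v₁, hv₁⟩ := Λ₁.exists_isVertex
  exact (hP.quotNoLocalPeriodicity_of_prod Λ₁.hereditary_empty (Λ₁.saturated_empty h₁) hH₂ hS₂
    hv₁ hv₂ (Set.notMem_empty v₁) hv₂H).2

theorem StronglyAperiodic.exists_witness_fst (h₁ : Λ₁.StronglyAperiodic)
    {H : Set (Λ₁.prod Λ₂).Path} (hV : ∀ v ∈ H, (Λ₁.prod Λ₂).IsVertex v)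
    (hH : (Λ₁.prod Λ₂).Hereditary H) (hS : (Λ₁.prod Λ₂).Saturated H) {v₁ : Λ₁.Path}
    {v₂ : Λ₂.Path} (hv₁ : Λ₁.IsVertex v₁) (hv₂ : Λ₂.IsVertex v₂)
    (hvH : ((v₁, v₂) : (Λ₁.prod Λ₂).Path) ∉ H) {m₁ n₁ : Fin k₁ → ℕ} (hmn : m₁ ≠ n₁)
    (b₂ : Fin k₂ → ℕ) :
    ∃ l₁ l₂, Λ₁.r l₁ = v₁ ∧ Λ₂.r l₂ = v₂ ∧ ((Λ₁.s l₁, Λ₂.s l₂) : (Λ₁.prod Λ₂).Path) ∉ H ∧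
      m₁ ⊔ n₁ ≤ Λ₁.d l₁ ∧ Λ₂.d l₂ = b₂ ∧ Λ₁.Distinguishes l₁ m₁ n₁ := by
  obtain ⟨l₂, hr₂, hd₂, hs₂⟩ := (hS.slice_snd hv₁).avoidable b₂ v₂ hv₂ hvH
  have hw := Λ₂.isVertex_s l₂
  obtain ⟨l₁, hr₁, hs₁, hd₁, hdist⟩ := h₁ _ (fun w hw => (prod_isVertex_iff.1 (hV _ hw)).1)
    (hH.slice_fst hw) (hS.slice_fst hw) (Λ₁.ne_setOf_isVertex hv₁ hs₂) v₁ hv₁ hs₂ m₁ n₁ hmn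
  exact ⟨l₁, l₂, hr₁, hr₂, hs₁, hd₁, hd₂, hdist⟩

theorem StronglyAperiodic.exists_witness_snd (h₂ : Λ₂.StronglyAperiodic)
    {H : Set (Λ₁.prod Λ₂).Path} (hV : ∀ v ∈ H, (Λ₁.prod Λ₂).IsVertex v)
    (hH : (Λ₁.prod Λ₂).Hereditary H) (hS : (Λ₁.prod Λ₂).Saturated H) {v₁ : Λ₁.Path}
    {v₂ : Λ₂.Path} (hv₁ : Λ₁.IsVertex v₁) (hv₂ : Λ₂.IsVertex v₂)
    (hvH : ((v₁, v₂) : (Λ₁.prod Λ₂).Path) ∉ H) {m₂ n₂ : Fin k₂ → ℕ} (hmn : m₂ ≠ n₂)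
    (b₁ : Fin k₁ → ℕ) :
    ∃ l₁ l₂, Λ₁.r l₁ = v₁ ∧ Λ₂.r l₂ = v₂ ∧ ((Λ₁.s l₁, Λ₂.s l₂) : (Λ₁.prod Λ₂).Path) ∉ H ∧
      Λ₁.d l₁ = b₁ ∧ m₂ ⊔ n₂ ≤ Λ₂.d l₂ ∧ Λ₂.Distinguishes l₂ m₂ n₂ := by
  obtain ⟨l₁, hr₁, hd₁, hs₁⟩ := (hS.slice_fst hv₂).avoidable b₁ v₁ hv₁ hvH
  have hw := Λ₁.isVertex_s l₁
  obtain ⟨l₂, hr₂, hs₂, hd₂, hdist⟩ := h₂ _ (fun w hw => (prod_isVertex_iff.1 (hV _ hw)).2)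
    (hH.slice_snd hw) (hS.slice_snd hw) (Λ₂.ne_setOf_isVertex hv₂ hs₁) v₂ hv₂ hs₁ m₂ n₂ hmn
  exact ⟨l₁, l₂, hr₁, hr₂, hs₂, hd₁, hd₂, hdist⟩

theorem StronglyAperiodic.prod (h₁ : Λ₁.StronglyAperiodic) (h₂ : Λ₂.StronglyAperiodic) :
    (Λ₁.prod Λ₂).StronglyAperiodic := by
  rintro H hV hH hS - ⟨v₁, v₂⟩ hv hvH m n hmn
  obtain ⟨hv₁, hv₂⟩ := prod_isVertex_iff.1 hv
  obtain ⟨m₁, m₂, rfl⟩ : ∃ m₁ m₂, m = Fin.append m₁ m₂ := ⟨_, _, Fin.append_castAdd_natAdd.symm⟩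
  obtain ⟨n₁, n₂, rfl⟩ : ∃ n₁ n₂, n = Fin.append n₁ n₂ := ⟨_, _, Fin.append_castAdd_natAdd.symm⟩
  refine exists_prod_witness_iff.2 ?_
  rcases not_and_or.1 (Fin.append_inj_iff.not.1 hmn) with hmn₁ | hmn₂
  · obtain ⟨l₁, l₂, hr₁, hr₂, hs, hd₁, hd₂, hdist⟩ :=
      h₁.exists_witness_fst hV hH hS hv₁ hv₂ hvH hmn₁ (m₂ ⊔ n₂)
    exact ⟨l₁, l₂, hr₁, hr₂, hs, hd₁, hd₂.ge, .inl hdist⟩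
  · obtain ⟨l₁, l₂, hr₁, hr₂, hs, hd₁, hd₂, hdist⟩ :=
      h₂.exists_witness_snd hV hH hS hv₁ hv₂ hvH hmn₂ (m₁ ⊔ n₁)
    exact ⟨l₁, l₂, hr₁, hr₂, hs, hd₁.ge, hd₂, .inr hdist⟩

end StrongAperiodicity

end KGraph

theorem stmt9_general {k₁ k₂ : ℕ} (Λ₁ : KGraph k₁) (Λ₂ : KGraph k₂)
    (h₁s : Λ₁.NoSources)
    (h₂s : Λ₂.NoSources) :
    (Λ₁.prod Λ₂).StronglyAperiodic ↔
      (Λ₁.StronglyAperiodic ∧ Λ₂.StronglyAperiodic) :=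
  ⟨fun hP => ⟨hP.fst_of_prod h₂s, hP.snd_of_prod h₁s⟩, fun ⟨h₁, h₂⟩ => h₁.prod h₂⟩

/-- The cartesian product `Λ₁ × Λ₂` is strongly aperiodic iff both `Λ₁` and
`Λ₂` are strongly aperiodic. -/
theorem stmt9 {k₁ k₂ : ℕ} (Λ₁ : KGraph k₁) (Λ₂ : KGraph k₂)
    (h₁f : Λ₁.RowFinite) (h₁s : Λ₁.NoSources)
    (h₂f : Λ₂.RowFinite) (h₂s : Λ₂.NoSources) :
    (Λ₁.prod Λ₂).StronglyAperiodic ↔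
      (Λ₁.StronglyAperiodic ∧ Λ₂.StronglyAperiodic) :=
  stmt9_general Λ₁ Λ₂ h₁s h₂s
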